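/- arXiv:2405.05626 — 2 statements merged into one kernel-verified Lean document; each statement's English description precedes it below -/
import Mathlib

section
/- Fix integers N ≥ 1, M ≥ 1, p̄ ≥ 1 and a real ε > 0. Let λ_1, …, λ_p̄ > 0 and let Λ ∈ ℝ^{p̄×p̄} be the diagonal matrix with entries λ_p. Let Φ ∈ ℝ^{N×p̄} be a matrix satisfying |(ΦᵀΦ)_{pq}/N − δ_{pq}| < ε/p̄ for all p, q ∈ {1,…,p̄}, where δ_{pq} is the Kronecker delta. Let R ∈ ℝ^{N×N} be a diagonal matrix whose diagonal entries are all ≥ r_min for some r_min > 0. Then for every vector φ ∈ ℝ^{p̄}, the matrix ΦΛΦᵀ + R/M is invertible and φᵀΛφ − φᵀΛΦᵀ(ΦΛΦᵀ + R/M)^{-1}ΦΛφ ≥ (1 − ε) Σ_{p=1}^{p̄} (r_min λ_p)/(r_min + N M λ_p) · φ_p². -/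
/-!
By the Woodbury identity the posterior variance is `φᵀ B⁻¹ φ` for the posterior precision
`B = Λ⁻¹ + Φᵀ (R/M)⁻¹ Φ`. Near-orthonormality of the columns of `Φ` gives `ΦᵀΦ ≤ N (1 + ε)`,
and `(R/M)⁻¹ ≤ M / r_min`, so `B` is dominated by the diagonal matrix
`C = Λ⁻¹ + (1 + ε) N M / r_min`. Inversion reverses this order, and the diagonal entries
`r_min λ_p / (r_min + (1 + ε) N M λ_p)` of `C⁻¹` are at least `1 - ε` times the target ones.
-/

open Matrix

namespace Matrix

variable {n m α : Type*} [Fintype n] [Fintype m]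

lemma dotProduct_diagonal_mulVec_self [CommSemiring α] [DecidableEq n] (v x : n → α) :
    x ⬝ᵥ (diagonal v *ᵥ x) = ∑ i, v i * x i ^ 2 := by
  simp only [dotProduct, mulVec_diagonal]
  exact Finset.sum_congr rfl fun i _ => by ring

lemma dotProduct_transpose_mul_mul_mulVec [CommSemiring α] (Φ : Matrix m n α)
    (A : Matrix m m α) (x : n → α) :
    x ⬝ᵥ ((Φᵀ * A * Φ) *ᵥ x) = (Φ *ᵥ x) ⬝ᵥ (A *ᵥ (Φ *ᵥ x)) := by
  rw [← mulVec_mulVec, ← mulVec_mulVec, dotProduct_mulVec, vecMul_transpose]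

lemma inv_diagonal_of_ne_zero [Field α] [DecidableEq n] {v : n → α} (hv : ∀ i, v i ≠ 0) :
    (diagonal v)⁻¹ = diagonal fun i => (v i)⁻¹ :=
  inv_eq_left_inv <| by
    rw [diagonal_mul_diagonal, ← diagonal_one]
    exact congrArg diagonal (funext fun i => inv_mul_cancel₀ (hv i))

lemma sub_mul_inv_mul_eq_inv_add [CommRing α] [DecidableEq n] [DecidableEq m]
    {L : Matrix n n α} {S : Matrix m m α} (Φ : Matrix m n α) (hL : IsUnit L) (hS : IsUnit S)
    (hA : IsUnit (Φ * L * Φᵀ + S)) :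
    L - L * Φᵀ * (Φ * L * Φᵀ + S)⁻¹ * Φ * L = (L⁻¹ + Φᵀ * S⁻¹ * Φ)⁻¹ := by
  have hL' : L⁻¹⁻¹ = L := nonsing_inv_nonsing_inv L ((isUnit_iff_isUnit_det L).mp hL)
  have hS' : S⁻¹⁻¹ = S := nonsing_inv_nonsing_inv S ((isUnit_iff_isUnit_det S).mp hS)
  rw [add_mul_mul_inv_eq_sub _ _ _ _ (isUnit_nonsing_inv_iff.mpr hL)
    (isUnit_nonsing_inv_iff.mpr hS) (by rwa [hL', hS', add_comm]), hL', hS', add_comm S]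

lemma PosDef.dotProduct_inv_mulVec_le_of_le {B C : Matrix n n ℝ} [DecidableEq n] (hB : B.PosDef)
    (hC : IsUnit C) (hBC : ∀ x, x ⬝ᵥ (B *ᵥ x) ≤ x ⬝ᵥ (C *ᵥ x)) (φ : n → ℝ) :
    φ ⬝ᵥ (C⁻¹ *ᵥ φ) ≤ φ ⬝ᵥ (B⁻¹ *ᵥ φ) := by
  set u := B⁻¹ *ᵥ φ
  set z := C⁻¹ *ᵥ φ
  have hBu : B *ᵥ u = φ := by
    rw [mulVec_mulVec, mul_nonsing_inv B ((isUnit_iff_isUnit_det B).mp hB.isUnit), one_mulVec]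
  have hCz : C *ᵥ z = φ := by
    rw [mulVec_mulVec, mul_nonsing_inv C ((isUnit_iff_isUnit_det C).mp hC), one_mulVec]
  have hBsymm : ∀ v, v ⬝ᵥ (B *ᵥ z) = (B *ᵥ v) ⬝ᵥ z := fun v => by
    rw [dotProduct_mulVec, ← vecMul_transpose, ← conjTranspose_eq_transpose_of_trivial,
      hB.isHermitian.eq]
  -- completing the square: `0 ≤ (u - z)ᵀ B (u - z) ≤ φᵀu - 2 φᵀz + zᵀ C z = φᵀu - φᵀz`
  have hsq : 0 ≤ (u - z) ⬝ᵥ (B *ᵥ (u - z)) := by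
    simpa using hB.posSemidef.dotProduct_mulVec_nonneg (u - z)
  have hz := hBC z
  rw [mulVec_sub, dotProduct_sub, sub_dotProduct, sub_dotProduct, hBsymm, hBu] at hsq
  rw [hCz] at hz
  simp only [dotProduct_comm z φ, dotProduct_comm u φ] at hsq hz
  linarith

lemma dotProduct_mulVec_le_of_abs_le {E : Matrix n n ℝ} {c : ℝ} (hE : ∀ i j, |E i j| ≤ c)
    (x : n → ℝ) : x ⬝ᵥ (E *ᵥ x) ≤ c * Fintype.card n * ∑ i, x i ^ 2 := by
  have hterm : ∀ i j, x i * (E i j * x j) ≤ c * ((x i ^ 2 + x j ^ 2) / 2) := fun i j =>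
    calc x i * (E i j * x j) ≤ |E i j| * |x i * x j| := by
          rw [← abs_mul]; exact (le_abs_self _).trans_eq (by ring_nf)
      _ ≤ |E i j| * ((x i ^ 2 + x j ^ 2) / 2) := by
          gcongr
          rw [abs_mul]
          nlinarith [two_mul_le_add_sq |x i| |x j|, sq_abs (x i), sq_abs (x j)]
      _ ≤ c * ((x i ^ 2 + x j ^ 2) / 2) := by gcongr; exact hE i j
  calc x ⬝ᵥ (E *ᵥ x) = ∑ i, ∑ j, x i * (E i j * x j) := by
        simp only [dotProduct, mulVec, Finset.mul_sum]
    _ ≤ ∑ i, ∑ j, c * ((x i ^ 2 + x j ^ 2) / 2) :=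
        Finset.sum_le_sum fun i _ => Finset.sum_le_sum fun j _ => hterm i j
    _ = c * Fintype.card n * ∑ i, x i ^ 2 := by
        simp only [← Finset.mul_sum, ← Finset.sum_div, Finset.sum_add_distrib, Finset.sum_const,
          Finset.card_univ, nsmul_eq_mul, ← Finset.mul_sum]
        ring

lemma dotProduct_transpose_mul_mulVec_le [DecidableEq n] {Φ : Matrix m n ℝ} {N δ : ℝ}
    (hN : 0 < N) (hΦ : ∀ p q, |(Φᵀ * Φ) p q / N - (1 : Matrix n n ℝ) p q| ≤ δ) (x : n → ℝ) :
    x ⬝ᵥ ((Φᵀ * Φ) *ᵥ x) ≤ N * (1 + δ * Fintype.card n) * ∑ p, x p ^ 2 := by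
  set E := N⁻¹ • (Φᵀ * Φ) - 1
  have hgram : Φᵀ * Φ = N • (1 + E) := by
    rw [add_sub_cancel, smul_smul, mul_inv_cancel₀ hN.ne', one_smul]
  have hE : ∀ p q, |E p q| ≤ δ := fun p q => by simpa [E, div_eq_inv_mul] using hΦ p q
  have hx : x ⬝ᵥ x = ∑ p, x p ^ 2 := Finset.sum_congr rfl fun p _ => (sq (x p)).symm
  rw [hgram, smul_mulVec, dotProduct_smul, add_mulVec, one_mulVec, dotProduct_add, hx,
    smul_eq_mul]
  nlinarith [dotProduct_mulVec_le_of_abs_le hE x]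

lemma dotProduct_transpose_mul_diagonal_mul_mulVec_le [DecidableEq m] (Φ : Matrix m n ℝ)
    {w : m → ℝ} {c : ℝ} (hw : ∀ i, w i ≤ c) (x : n → ℝ) :
    x ⬝ᵥ ((Φᵀ * diagonal w * Φ) *ᵥ x) ≤ c * x ⬝ᵥ ((Φᵀ * Φ) *ᵥ x) := by
  rw [dotProduct_transpose_mul_mul_mulVec, dotProduct_diagonal_mulVec_self, ← Matrix.mul_one Φᵀ,
    dotProduct_transpose_mul_mul_mulVec, ← diagonal_one, dotProduct_diagonal_mulVec_self,
    Finset.mul_sum]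
  exact Finset.sum_le_sum fun i _ => by rw [← mul_assoc, mul_one]; gcongr; exact hw i

lemma PosSemidef.mul_mul_transpose_add_posDef {L : Matrix n n ℝ} {S : Matrix m m ℝ}
    (hL : L.PosSemidef) (hS : S.PosDef) (Φ : Matrix m n ℝ) : (Φ * L * Φᵀ + S).PosDef :=
  .posSemidef_add (by simpa using hL.mul_mul_conjTranspose_same Φ) hS

end Matrix

section PosteriorVariance

variable {n m : Type*} [Fintype n] [Fintype m] [DecidableEq n] [DecidableEq m]

noncomputable def posteriorVariance (L : Matrix n n ℝ) (S : Matrix m m ℝ) (Φ : Matrix m n ℝ)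
    (φ : n → ℝ) : ℝ :=
  φ ⬝ᵥ (L *ᵥ φ) - φ ⬝ᵥ ((L * Φᵀ * (Φ * L * Φᵀ + S)⁻¹ * Φ * L) *ᵥ φ)

lemma posteriorVariance_eq_dotProduct_inv_mulVec {L : Matrix n n ℝ} {S : Matrix m m ℝ}
    {Φ : Matrix m n ℝ} (hL : IsUnit L) (hS : IsUnit S) (hA : IsUnit (Φ * L * Φᵀ + S))
    (φ : n → ℝ) :
    posteriorVariance L S Φ φ = φ ⬝ᵥ ((L⁻¹ + Φᵀ * S⁻¹ * Φ)⁻¹ *ᵥ φ) := by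
  rw [posteriorVariance, ← dotProduct_sub, ← sub_mulVec, sub_mul_inv_mul_eq_inv_add Φ hL hS hA]

lemma sum_inv_inv_add_mul_sq_le_posteriorVariance {lam : n → ℝ} (hlam : ∀ p, 0 < lam p)
    {s : m → ℝ} (hs : ∀ i, 0 < s i) (Φ : Matrix m n ℝ) {κ : ℝ} (hκ : 0 ≤ κ)
    (hΦ : ∀ x, x ⬝ᵥ ((Φᵀ * diagonal (fun i => (s i)⁻¹) * Φ) *ᵥ x) ≤ κ * ∑ p, x p ^ 2)
    (φ : n → ℝ) :
    ∑ p, ((lam p)⁻¹ + κ)⁻¹ * φ p ^ 2 ≤ posteriorVariance (diagonal lam) (diagonal s) Φ φ := by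
  have hL : (diagonal lam).PosDef := .diagonal hlam
  have hS : (diagonal s).PosDef := .diagonal hs
  have hB : ((diagonal lam)⁻¹ + Φᵀ * (diagonal s)⁻¹ * Φ).PosDef :=
    hL.inv.add_posSemidef (by simpa using hS.inv.posSemidef.conjTranspose_mul_mul_same Φ)
  have hc : ∀ p, (lam p)⁻¹ + κ ≠ 0 := fun p =>
    (add_pos_of_pos_of_nonneg (inv_pos.2 (hlam p)) hκ).ne'
  rw [posteriorVariance_eq_dotProduct_inv_mulVec hL.isUnit hS.isUnit
    (hL.posSemidef.mul_mul_transpose_add_posDef hS Φ).isUnit, ← dotProduct_diagonal_mulVec_self,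
    ← inv_diagonal_of_ne_zero hc]
  refine hB.dotProduct_inv_mulVec_le_of_le
    (isUnit_diagonal.mpr (Pi.isUnit_iff.mpr fun p => (hc p).isUnit)) (fun x => ?_) φ
  rw [inv_diagonal_of_ne_zero fun p => (hlam p).ne', inv_diagonal_of_ne_zero fun i => (hs i).ne',
    add_mulVec, dotProduct_add, dotProduct_diagonal_mulVec_self, dotProduct_diagonal_mulVec_self]
  simp only [add_mul, Finset.sum_add_distrib, ← Finset.mul_sum]
  gcongr
  exact hΦ x

end PosteriorVariance

lemma one_sub_mul_div_le_inv_inv_add {ε r l a : ℝ} (hε : 0 ≤ ε) (hr : 0 < r) (hl : 0 < l)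
    (ha : 0 ≤ a) : (1 - ε) * (r * l / (r + a * l)) ≤ (l⁻¹ + (1 + ε) * a / r)⁻¹ := by
  have hinv : (l⁻¹ + (1 + ε) * a / r)⁻¹ = r * l / (r + (1 + ε) * a * l) := by
    field_simp
  rw [hinv, ← mul_div_assoc, div_le_div_iff₀ (by positivity) (by positivity)]
  nlinarith [mul_nonneg (mul_nonneg hε hr.le) (mul_pos hr hl).le,
    mul_nonneg (mul_nonneg (mul_nonneg hε hε) (mul_nonneg ha hl.le)) (mul_pos hr hl).le]

/-- deterministic core of the lower bound on the heteroscedastic GP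
posterior variance for a degenerate kernel.  For `N, M, p̄ ≥ 1`, `ε > 0`, positive
eigenvalues `λ_p`, a feature matrix `Φ` whose normalized Gram matrix is entrywise
`ε/p̄`-close to the identity, and a diagonal noise matrix `R` with diagonal entries
`≥ r_min > 0`, the matrix `ΦΛΦᵀ + R/M` is invertible and the posterior variance
quadratic form at any `φ` is bounded below by
`(1 − ε) Σ_p r_min λ_p/(r_min + N M λ_p) φ_p²`. -/
theorem stmt_0 (N M pbar : ℕ) (hN : 1 ≤ N) (hM : 1 ≤ M) (hpbar : 1 ≤ pbar)
    (ε : ℝ) (hε : 0 < ε)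
    (lam : Fin pbar → ℝ) (hlam : ∀ p, 0 < lam p)
    (Φ : Matrix (Fin N) (Fin pbar) ℝ)
    (hΦ : ∀ p q, |(Φᵀ * Φ) p q / (N : ℝ) - (if p = q then 1 else 0)| < ε / (pbar : ℝ))
    (rmin : ℝ) (hrmin : 0 < rmin)
    (d : Fin N → ℝ) (hd : ∀ i, rmin ≤ d i) :
    IsUnit (Φ * Matrix.diagonal lam * Φᵀ + (M : ℝ)⁻¹ • Matrix.diagonal d) ∧
    ∀ φ : Fin pbar → ℝ,
      φ ⬝ᵥ (Matrix.diagonal lam *ᵥ φ) -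
        φ ⬝ᵥ ((Matrix.diagonal lam * Φᵀ *
          (Φ * Matrix.diagonal lam * Φᵀ + (M : ℝ)⁻¹ • Matrix.diagonal d)⁻¹ *
          Φ * Matrix.diagonal lam) *ᵥ φ)
      ≥ (1 - ε) * ∑ p, rmin * lam p / (rmin + (N : ℝ) * (M : ℝ) * lam p) * (φ p) ^ 2 := by
  have hNpos : (0 : ℝ) < N := by exact_mod_cast hN
  have hMpos : (0 : ℝ) < M := by exact_mod_cast hM
  have hs : ∀ i, 0 < d i / M := fun i => div_pos (hrmin.trans_le (hd i)) hMpos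
  have hS : (M : ℝ)⁻¹ • diagonal d = diagonal fun i => d i / M := by
    rw [← diagonal_smul]; congr 1; ext i; simp [div_eq_inv_mul]
  rw [hS]
  refine ⟨((PosDef.diagonal hlam).posSemidef.mul_mul_transpose_add_posDef (.diagonal hs) Φ).isUnit,
    fun φ => ?_⟩
  have hnoise : ∀ x, x ⬝ᵥ ((Φᵀ * diagonal (fun i => (d i / M)⁻¹) * Φ) *ᵥ x) ≤
      (1 + ε) * (N * M) / rmin * ∑ p, x p ^ 2 := fun x => by
    have hgram := dotProduct_transpose_mul_mulVec_le (δ := ε / pbar) hNpos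
      (fun p q => by simpa [one_apply] using (hΦ p q).le) x
    rw [Fintype.card_fin, div_mul_cancel₀ ε (Nat.cast_ne_zero.mpr (by omega))] at hgram
    calc _ ≤ M / rmin * x ⬝ᵥ ((Φᵀ * Φ) *ᵥ x) := dotProduct_transpose_mul_diagonal_mul_mulVec_le Φ
          (fun i => by simpa using div_le_div_of_nonneg_left hMpos.le hrmin (hd i)) x
      _ ≤ M / rmin * (N * (1 + ε) * ∑ p, x p ^ 2) := by gcongr
      _ = _ := by ring
  calc (1 - ε) * ∑ p, rmin * lam p / (rmin + N * M * lam p) * φ p ^ 2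
      ≤ ∑ p, ((lam p)⁻¹ + (1 + ε) * (N * M) / rmin)⁻¹ * φ p ^ 2 := by
        rw [Finset.mul_sum]
        refine Finset.sum_le_sum fun p _ => ?_
        rw [← mul_assoc]
        gcongr
        exact one_sub_mul_div_le_inv_inv_add hε.le hrmin (hlam p) (by positivity)
    _ ≤ _ := sum_inv_inv_add_mul_sq_le_posteriorVariance hlam hs Φ (by positivity) hnoise φ
end

section
/- Let (Ω, 𝓕, P) be a probability space and let (X_i)_{i∈ℕ} be an i.i.d. sequence of random variables taking values in a measurable space E with common distribution ν. Fix an integer p̄ ≥ 1 and measurable functions φ_1, …, φ_p̄ : E → ℝ, each square-integrable with respect to ν, such that ∫ φ_p φ_q dν = δ_{pq} for all p, q ∈ {1,…,p̄}. Fix reals λ_1, …, λ_p̄ > 0, an integer M ≥ 1, a measurable function r : E → ℝ with r(x) ≥ r_min > 0 for ν-almost every x, and ε > 0. For each N ≥ 1 and ω ∈ Ω, let Φ_N(ω) ∈ ℝ^{N×p̄} be the matrix with entries φ_p(X_i(ω)), let Λ = diag(λ_1,…,λ_p̄), let R_N(ω) be the N×N diagonal matrix with entries r(X_i(ω)), and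 define the integrated posterior variance IMSE_N(ω) = ∫_E [φ(x)ᵀΛφ(x) − φ(x)ᵀΛΦ_N(ω)ᵀ(Φ_N(ω)ΛΦ_N(ω)ᵀ + R_N(ω)/M)^{-1}Φ_N(ω)Λφ(x)] dν(x), where φ(x) = (φ_1(x),…,φ_p̄(x))ᵀ. Then P-almost surely there exists Ñ such that for all N ≥ Ñ, IMSE_N > (1 − ε) · r_min · Σ_{p=1}^{p̄} λ_p/(r_min + N M λ_p). -/
/-!
By orthonormality of the `φ_p`, `IMSE_N = Σ_p (λ_p - λ_p² vₚᵀ A⁻¹ vₚ)`, where `vₚ = (φ_p(X_i))_i`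
and `A = ΦΛΦᵀ + R/M ⪰ λ_p vₚvₚᵀ + (r_min/M) I`. This lower bound and Cauchy–Schwarz give
`vₚᵀA⁻¹vₚ ≤ sₚ / (r_min/M + λ_p sₚ)` with `sₚ = ‖vₚ‖²`, i.e. the `p`-th term is at least
`λ_p r_min / (r_min + M λ_p sₚ)`. By the strong law of large numbers `sₚ / N → ∫ φ_p² dν = 1`,
so eventually `sₚ ≤ (1 + ε) N`, and `(1 - ε)(1 + ε) < 1` finishes the estimate.
-/

open Matrix MeasureTheory ProbabilityTheory

/-- The heteroscedastic Gaussian process posterior variance at a point whose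
eigenfunction feature vector is `φv`, for a degenerate kernel with eigenvalues
`lam`, feature matrix `Φ` of the `N` observation points, noise variance matrix
`R`, and `M` Monte Carlo samples per point:
`φvᵀΛφv − φvᵀΛΦᵀ(ΦΛΦᵀ + R/M)⁻¹ΦΛφv`. -/
noncomputable def postVar (pbar N : ℕ) (lam : Fin pbar → ℝ) (M : ℕ)
    (Φ : Matrix (Fin N) (Fin pbar) ℝ) (R : Matrix (Fin N) (Fin N) ℝ)
    (φv : Fin pbar → ℝ) : ℝ :=
  φv ⬝ᵥ (Matrix.diagonal lam *ᵥ φv) -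
    φv ⬝ᵥ ((Matrix.diagonal lam * Φᵀ *
      (Φ * Matrix.diagonal lam * Φᵀ + (M : ℝ)⁻¹ • R)⁻¹ * Φ * Matrix.diagonal lam) *ᵥ φv)

open Filter Topology Finset

section QuadraticForms

variable {ι κ : Type*} [Fintype ι] [Fintype κ]

theorem dotProduct_mulVec_mul_diagonal_mul_transpose {R : Type*} [CommRing R] [DecidableEq κ]
    (Φ : Matrix ι κ R) (d : κ → R) (x : ι → R) :
    x ⬝ᵥ ((Φ * diagonal d * Φᵀ) *ᵥ x) = ∑ q, d q * (Φᵀ *ᵥ x) q ^ 2 := by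
  rw [← mulVec_mulVec, ← mulVec_mulVec, dotProduct_mulVec, ← mulVec_transpose]
  simp only [dotProduct, mulVec_diagonal]
  exact sum_congr rfl fun q _ => by ring

theorem mul_sq_le_dotProduct_mulVec_mul_diagonal_mul_transpose [DecidableEq κ]
    (Φ : Matrix ι κ ℝ) {d : κ → ℝ} (hd : ∀ q, 0 ≤ d q) (x : ι → ℝ) (p : κ) :
    d p * (Φᵀ p ⬝ᵥ x) ^ 2 ≤ x ⬝ᵥ ((Φ * diagonal d * Φᵀ) *ᵥ x) := by
  rw [dotProduct_mulVec_mul_diagonal_mul_transpose]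
  exact single_le_sum (f := fun q => d q * (Φᵀ *ᵥ x) q ^ 2)
    (fun q _ => mul_nonneg (hd q) (sq_nonneg _)) (mem_univ p)

theorem mul_dotProduct_self_le_dotProduct_diagonal_mulVec [DecidableEq ι] {r : ι → ℝ} {a : ℝ}
    (hr : ∀ i, a ≤ r i) (x : ι → ℝ) : a * (x ⬝ᵥ x) ≤ x ⬝ᵥ (diagonal r *ᵥ x) := by
  simp only [dotProduct, mulVec_diagonal, mul_sum]
  exact sum_le_sum fun i _ => by nlinarith [hr i, mul_self_nonneg (x i)]

theorem diagonal_mul_transpose_mul_mul_mul_diagonal_apply_self {R : Type*} [CommRing R]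
    [DecidableEq κ] (d : κ → R) (Φ : Matrix ι κ R) (C : Matrix ι ι R) (p : κ) :
    (diagonal d * Φᵀ * C * Φ * diagonal d) p p = d p * d p * (Φᵀ p ⬝ᵥ (C *ᵥ Φᵀ p)) := by
  rw [mul_diagonal, Matrix.mul_assoc (diagonal d), Matrix.mul_assoc (diagonal d), diagonal_mul,
    Matrix.mul_assoc Φᵀ, mul_apply']
  change d p * (Φᵀ p ⬝ᵥ (C *ᵥ Φᵀ p)) * d p = _
  ring

/-- By Cauchy–Schwarz, `t = vᵀA⁻¹v` satisfies `t ≥ l t² + c t² / ‖v‖²`. -/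
theorem dotProduct_inv_mulVec_le_of_le_dotProduct_mulVec [DecidableEq ι] {A : Matrix ι ι ℝ}
    {v : ι → ℝ} {l c : ℝ} (hl : 0 ≤ l) (hc : 0 < c)
    (hA : ∀ x, l * (v ⬝ᵥ x) ^ 2 + c * (x ⬝ᵥ x) ≤ x ⬝ᵥ (A *ᵥ x)) :
    v ⬝ᵥ (A⁻¹ *ᵥ v) ≤ (v ⬝ᵥ v) / (c + l * (v ⬝ᵥ v)) := by
  have hself : ∀ w : ι → ℝ, 0 ≤ w ⬝ᵥ w := fun w => by
    simpa using dotProduct_self_star_nonneg w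
  have hden : 0 < c + l * (v ⬝ᵥ v) := by have := hself v; positivity
  by_cases hdet : IsUnit A.det
  · set w := A⁻¹ *ᵥ v
    have hAw : A *ᵥ w = v := by rw [mulVec_mulVec, mul_nonsing_inv _ hdet, one_mulVec]
    have hq := hA w
    rw [hAw, dotProduct_comm w v] at hq
    have hcs : (v ⬝ᵥ w) ^ 2 ≤ (v ⬝ᵥ v) * (w ⬝ᵥ w) := by
      simpa only [dotProduct, pow_two] using sum_mul_sq_le_sq_mul_sq univ v w
    have ht : 0 ≤ v ⬝ᵥ w := le_trans (by have := hself w; positivity) hq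
    have hmul : v ⬝ᵥ w * (v ⬝ᵥ w * (c + l * (v ⬝ᵥ v))) ≤ v ⬝ᵥ w * (v ⬝ᵥ v) := by
      nlinarith [hself v, hself w]
    rw [le_div_iff₀ hden]
    rcases ht.eq_or_lt with h0 | hpos
    · rw [← h0, zero_mul]; exact hself v
    · exact le_of_mul_le_mul_left hmul hpos
  · rw [nonsing_inv_apply_not_isUnit _ hdet, zero_mulVec, dotProduct_zero]
    exact div_nonneg (hself v) hden.le

theorem div_le_sub_diagonal_mul_transpose_mul_inv_apply_self [DecidableEq ι] [DecidableEq κ]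
    (Φ : Matrix ι κ ℝ) {lam : κ → ℝ} (hlam : ∀ q, 0 ≤ lam q) {M : ℝ} (hM : 0 < M) {r : ι → ℝ}
    {rmin : ℝ} (hrmin : 0 < rmin) (hr : ∀ i, rmin ≤ r i) (p : κ) :
    lam p * rmin / (rmin + M * lam p * (Φᵀ p ⬝ᵥ Φᵀ p)) ≤ lam p -
      (diagonal lam * Φᵀ * (Φ * diagonal lam * Φᵀ + M⁻¹ • diagonal r)⁻¹ * Φ * diagonal lam) p p := by
  set A := Φ * diagonal lam * Φᵀ + M⁻¹ • diagonal r
  set s := Φᵀ p ⬝ᵥ Φᵀ p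
  have hquad : ∀ x, lam p * (Φᵀ p ⬝ᵥ x) ^ 2 + rmin / M * (x ⬝ᵥ x) ≤ x ⬝ᵥ (A *ᵥ x) := by
    intro x
    have hnoise := mul_dotProduct_self_le_dotProduct_diagonal_mulVec hr x
    rw [add_mulVec, dotProduct_add, smul_mulVec, dotProduct_smul, smul_eq_mul, div_eq_inv_mul,
      mul_assoc]
    exact add_le_add (mul_sq_le_dotProduct_mulVec_mul_diagonal_mul_transpose Φ hlam x p)
      (by gcongr)
  have hQ := dotProduct_inv_mulVec_le_of_le_dotProduct_mulVec (hlam p) (div_pos hrmin hM) hquad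
  rw [diagonal_mul_transpose_mul_mul_mul_diagonal_apply_self]
  have hs : 0 ≤ s := by simpa using dotProduct_self_star_nonneg (Φᵀ p)
  have hden : 0 < rmin + M * lam p * s := by have := hlam p; positivity
  have hden' : rmin / M + lam p * s = (rmin + M * lam p * s) / M := by
    field_simp
  calc lam p * rmin / (rmin + M * lam p * s)
      = lam p - lam p * lam p * (s / (rmin / M + lam p * s)) := by
        rw [hden', div_div_eq_mul_div, eq_sub_iff_add_eq, mul_div_assoc', ← add_div,
          div_eq_iff hden.ne']
        ring
    _ ≤ lam p - lam p * lam p * (Φᵀ p ⬝ᵥ (A⁻¹ *ᵥ Φᵀ p)) := by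
        have := hlam p
        gcongr

end QuadraticForms

theorem integral_dotProduct_mulVec_of_orthonormal {E κ : Type*} [MeasurableSpace E]
    [Fintype κ] [DecidableEq κ] {ν : Measure E} {φ : κ → E → ℝ} (hφ : ∀ p, MemLp (φ p) 2 ν)
    (horth : ∀ p q, ∫ x, φ p x * φ q x ∂ν = if p = q then 1 else 0) (K : Matrix κ κ ℝ) :
    ∫ x, (fun p => φ p x) ⬝ᵥ (K *ᵥ fun p => φ p x) ∂ν = K.trace := by
  have hint : ∀ p q, Integrable (fun x => K p q * (φ p x * φ q x)) ν := fun p q =>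
    ((hφ p).integrable_mul (hφ q)).const_mul _
  have hexpand : ∀ x, (fun p => φ p x) ⬝ᵥ (K *ᵥ fun p => φ p x)
      = ∑ p, ∑ q, K p q * (φ p x * φ q x) := fun x => by
    simp only [dotProduct, mulVec, mul_sum]
    exact sum_congr rfl fun p _ => sum_congr rfl fun q _ => by ring
  simp_rw [hexpand]
  rw [integral_finsetSum _ fun p _ => integrable_finsetSum _ fun q _ => hint p q]
  refine sum_congr rfl fun p _ => ?_
  rw [integral_finsetSum _ fun q _ => hint p q]
  simp [integral_const_mul, horth]

theorem integral_postVar {E : Type*} [MeasurableSpace E] {ν : Measure E} {pbar : ℕ}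
    {φ : Fin pbar → E → ℝ} (hφ : ∀ p, MemLp (φ p) 2 ν)
    (horth : ∀ p q, ∫ x, φ p x * φ q x ∂ν = if p = q then 1 else 0)
    (N : ℕ) (lam : Fin pbar → ℝ) (M : ℕ) (Φ : Matrix (Fin N) (Fin pbar) ℝ)
    (R : Matrix (Fin N) (Fin N) ℝ) :
    ∫ x, postVar pbar N lam M Φ R (fun p => φ p x) ∂ν = ∑ p, (lam p -
      (diagonal lam * Φᵀ * (Φ * diagonal lam * Φᵀ + (M : ℝ)⁻¹ • R)⁻¹ * Φ * diagonal lam) p p) := by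
  simp only [postVar, ← dotProduct_sub, ← sub_mulVec]
  rw [integral_dotProduct_mulVec_of_orthonormal hφ horth, trace_sub, trace_diagonal,
    trace, ← sum_sub_distrib]
  rfl

theorem one_sub_mul_div_lt_div_of_le {lam rmin ε M N s : ℝ} (hlam : 0 < lam) (hrmin : 0 < rmin)
    (hε : 0 < ε) (hM : 0 < M) (hN : 0 ≤ N) (hs : 0 ≤ s) (hsN : s ≤ (1 + ε) * N) :
    (1 - ε) * (rmin * (lam / (rmin + N * M * lam))) < lam * rmin / (rmin + M * lam * s) := by
  have hD : 0 < rmin + N * M * lam := by positivity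
  have hD' : 0 < rmin + M * lam * s := by positivity
  have hMlam : M * lam * s ≤ (1 + ε) * (N * M * lam) := by
    have := mul_le_mul_of_nonneg_left hsN (by positivity : 0 ≤ M * lam)
    linarith
  have hcmp : (1 - ε) * (rmin + M * lam * s) < rmin + N * M * lam := by
    rcases le_or_gt 1 ε with h1 | h1
    · nlinarith
    · nlinarith [mul_nonneg (sq_nonneg ε) (by positivity : 0 ≤ N * M * lam)]
  rw [mul_div_assoc', mul_div_assoc', div_lt_div_iff₀ hD hD']
  nlinarith [mul_pos hlam hrmin]

theorem eventually_sum_range_le_mul_of_tendsto {u : ℕ → ℝ} {a b : ℝ}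
    (h : Tendsto (fun n : ℕ => (∑ i ∈ range n, u i) / n) atTop (𝓝 a)) (hab : a < b) :
    ∀ᶠ n : ℕ in atTop, ∑ i ∈ range n, u i ≤ b * n := by
  filter_upwards [h.eventually (gt_mem_nhds hab), eventually_ge_atTop 1] with n hlt hn
  have hn' : (0 : ℝ) < n := by exact_mod_cast hn
  exact (div_le_iff₀ hn').mp hlt.le

section IID

variable {Ω E : Type*} [MeasurableSpace Ω] [MeasurableSpace E] {P : Measure Ω} {ν : Measure E}

theorem ae_forall_comp_of_map_eq {ι : Type*} [Countable ι] {X : ι → Ω → E}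
    (hX : ∀ i, AEMeasurable (X i) P) (hdist : ∀ i, P.map (X i) = ν) {Q : E → Prop}
    (h : ∀ᵐ x ∂ν, Q x) : ∀ᵐ ω ∂P, ∀ i, Q (X i ω) :=
  ae_all_iff.2 fun i => ae_of_ae_map (hX i) (hdist i ▸ h)

theorem strong_law_ae_comp {X : ℕ → Ω → E} (hX : ∀ i, Measurable (X i)) (hindep : iIndepFun X P)
    (hdist : ∀ i, P.map (X i) = ν) {g : E → ℝ} (hg : Measurable g) (hint : Integrable g ν) :
    ∀ᵐ ω ∂P, Tendsto (fun n : ℕ => (∑ i ∈ range n, g (X i ω)) / n) atTop (𝓝 (∫ x, g x ∂ν)) := by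
  have hident : ∀ i, IdentDistrib (X i) (X 0) P P := fun i =>
    ⟨(hX i).aemeasurable, (hX 0).aemeasurable, by rw [hdist i, hdist 0]⟩
  have hmean : ∫ ω, g (X 0 ω) ∂P = ∫ x, g x ∂ν := by
    rw [← hdist 0, integral_map (hX 0).aemeasurable hg.aestronglyMeasurable]
  rw [← hdist 0] at hint
  simpa only [hmean] using strong_law_ae_real (fun i ω => g (X i ω)) (hint.comp_measurable (hX 0))
    (fun i j hij => (hindep.indepFun hij).comp hg hg) (fun i => (hident i).comp hg)

end IID

theorem lt_integral_postVar {E : Type*} [MeasurableSpace E] {ν : Measure E} {pbar : ℕ}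
    [NeZero pbar] {φ : Fin pbar → E → ℝ} (hφ : ∀ p, MemLp (φ p) 2 ν)
    (horth : ∀ p q, ∫ x, φ p x * φ q x ∂ν = if p = q then 1 else 0)
    {lam : Fin pbar → ℝ} (hlam : ∀ p, 0 < lam p) {M : ℕ} (hM : 1 ≤ M) {r : E → ℝ} {rmin ε : ℝ}
    (hrmin : 0 < rmin) (hε : 0 < ε) {N : ℕ} {x : Fin N → E} (hr : ∀ i, rmin ≤ r (x i))
    (hs : ∀ p, ∑ i, φ p (x i) * φ p (x i) ≤ (1 + ε) * N) :
    (1 - ε) * (rmin * ∑ p, lam p / (rmin + (N : ℝ) * (M : ℝ) * lam p)) <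
      ∫ y, postVar pbar N lam M (Matrix.of fun i p => φ p (x i))
        (diagonal fun i => r (x i)) (fun p => φ p y) ∂ν := by
  have hM' : (0 : ℝ) < M := by exact_mod_cast hM
  rw [integral_postVar hφ horth, mul_sum, mul_sum]
  refine sum_lt_sum_of_nonempty univ_nonempty fun p _ => ?_
  set Φ : Matrix (Fin N) (Fin pbar) ℝ := Matrix.of fun i p => φ p (x i)
  have hcol : Φᵀ p ⬝ᵥ Φᵀ p = ∑ i, φ p (x i) * φ p (x i) := rfl
  calc _ < lam p * rmin / (rmin + M * lam p * (Φᵀ p ⬝ᵥ Φᵀ p)) := by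
        rw [hcol]
        exact one_sub_mul_div_lt_div_of_le (hlam p) hrmin hε hM' N.cast_nonneg
          (sum_nonneg fun i _ => mul_self_nonneg _) (hs p)
    _ ≤ _ := div_le_sub_diagonal_mul_transpose_mul_inv_apply_self Φ (fun q => (hlam q).le) hM'
          hrmin hr p

theorem stmt_1_general {Ω E : Type*} [MeasurableSpace Ω] [MeasurableSpace E]
    (P : Measure Ω)
    (X : ℕ → Ω → E) (ν : Measure E)
    (hXmeas : ∀ i, Measurable (X i))
    (hindep : iIndepFun X P)
    (hdist : ∀ i, Measure.map (X i) P = ν)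
    (pbar : ℕ) (hpbar : 1 ≤ pbar)
    (φ : Fin pbar → E → ℝ) (hφmeas : ∀ p, Measurable (φ p))
    (hφL2 : ∀ p, MemLp (φ p) 2 ν)
    (horth : ∀ p q, ∫ x, φ p x * φ q x ∂ν = if p = q then 1 else 0)
    (lam : Fin pbar → ℝ) (hlam : ∀ p, 0 < lam p)
    (M : ℕ) (hM : 1 ≤ M)
    (r : E → ℝ)
    (rmin : ℝ) (hrmin : 0 < rmin) (hrge : ∀ᵐ x ∂ν, rmin ≤ r x)
    (ε : ℝ) (hε : 0 < ε) :
    ∀ᵐ ω ∂P, ∃ N₀ : ℕ, ∀ N, N₀ ≤ N →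
      (∫ x, postVar pbar N lam M
          (Matrix.of fun (i : Fin N) p => φ p (X i ω))
          (Matrix.diagonal fun (i : Fin N) => r (X i ω))
          (fun p => φ p x) ∂ν)
        > (1 - ε) * (rmin * ∑ p, lam p / (rmin + (N : ℝ) * (M : ℝ) * lam p)) := by
  have : NeZero pbar := ⟨by omega⟩
  have hlln : ∀ᵐ ω ∂P, ∀ p, Tendsto (fun n : ℕ => (∑ i ∈ range n, φ p (X i ω) * φ p (X i ω)) / n)
      atTop (𝓝 1) := ae_all_iff.2 fun p => by
    simpa [horth] using strong_law_ae_comp hXmeas hindep hdist ((hφmeas p).mul (hφmeas p))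
      ((hφL2 p).integrable_mul (hφL2 p))
  have hnoise := ae_forall_comp_of_map_eq (fun i => (hXmeas i).aemeasurable) hdist hrge
  filter_upwards [hlln, hnoise] with ω hω hr
  have hev : ∀ᶠ N : ℕ in atTop, ∀ p, ∑ i ∈ range N, φ p (X i ω) * φ p (X i ω) ≤ (1 + ε) * N :=
    eventually_all.2 fun p => eventually_sum_range_le_mul_of_tendsto (hω p) (by linarith)
  obtain ⟨N₀, hN₀⟩ := eventually_atTop.1 hev
  refine ⟨N₀, fun N hN => lt_integral_postVar hφL2 horth hlam hM hrmin hε (fun i => hr i) fun p => ?_⟩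
  rw [Fin.sum_univ_eq_sum_range (fun i => φ p (X i ω) * φ p (X i ω))]
  exact hN₀ N hN p

/-- the paper's Theorem 1 for a degenerate kernel
`k(x,x') = Σ_{p=1}^{p̄} λ_p φ_p(x)φ_p(x')`.  For i.i.d. observation points
`X_1, X_2, …` with distribution `ν`, eigenfunctions `φ_p` orthonormal in
`L²(ν)`, positive eigenvalues `λ_p`, a noise variance function `r ≥ r_min > 0`
(ν-a.e.), Monte Carlo sample size `M ≥ 1`, and any `ε > 0`, almost surely there
exists `N₀` such that for all `N ≥ N₀` the integrated posterior variance
satisfies `IMSE_N > (1 − ε) · r_min · Σ_p λ_p/(r_min + N M λ_p)`. -/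
theorem stmt_1 {Ω E : Type*} [MeasurableSpace Ω] [MeasurableSpace E]
    (P : Measure Ω) [IsProbabilityMeasure P]
    (X : ℕ → Ω → E) (ν : Measure E) [IsProbabilityMeasure ν]
    (hXmeas : ∀ i, Measurable (X i))
    (hindep : iIndepFun X P)
    (hdist : ∀ i, Measure.map (X i) P = ν)
    (pbar : ℕ) (hpbar : 1 ≤ pbar)
    (φ : Fin pbar → E → ℝ) (hφmeas : ∀ p, Measurable (φ p))
    (hφL2 : ∀ p, MemLp (φ p) 2 ν)
    (horth : ∀ p q, ∫ x, φ p x * φ q x ∂ν = if p = q then 1 else 0)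
    (lam : Fin pbar → ℝ) (hlam : ∀ p, 0 < lam p)
    (M : ℕ) (hM : 1 ≤ M)
    (r : E → ℝ) (hrmeas : Measurable r)
    (rmin : ℝ) (hrmin : 0 < rmin) (hrge : ∀ᵐ x ∂ν, rmin ≤ r x)
    (ε : ℝ) (hε : 0 < ε) :
    ∀ᵐ ω ∂P, ∃ N₀ : ℕ, ∀ N, N₀ ≤ N →
      (∫ x, postVar pbar N lam M
          (Matrix.of fun (i : Fin N) p => φ p (X i ω))
          (Matrix.diagonal fun (i : Fin N) => r (X i ω))
          (fun p => φ p x) ∂ν)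
        > (1 - ε) * (rmin * ∑ p, lam p / (rmin + (N : ℝ) * (M : ℝ) * lam p)) :=
  stmt_1_general P X ν hXmeas hindep hdist pbar hpbar φ hφmeas hφL2 horth lam hlam M hM r rmin hrmin
    hrge ε hε
end
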